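/- arXiv:1602.03125 — 2 statements merged into one kernel-verified Lean document; each statement's English description precedes it below -/
import Mathlib

section
/- Let n ≥ 4, ε > 0, Λ > 0, and let {g_i}_{i∈ℕ} be nonnegative Lebesgue-measurable functions on ℝⁿ × ℝ with ∫_{ℝⁿ×ℝ} g_i dx dt ≤ Λ for every i. Define 𝒞_ε := { z ∈ ℝⁿ × ℝ : liminf_{r→0⁺} liminf_{i→∞} r^{4−n} ∫_{P_r(z)} g_i(x,t) dx dt ≥ ε }. Then there is a constant C = C(n), depending only on n, such that 𝒫^{n−4}(𝒞_ε) ≤ C Λ / ε; in particular 𝒞_ε has finite (n−4)-dimensional parabolic Hausdorff measure. -/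
open MeasureTheory Filter Set Topology
open scoped ENNReal

noncomputable section

/-- `ℝⁿ × ℝ` equipped with the parabolic metric
`ϱ((x,t),(y,s)) = max {|x−y|, √|t−s|}`. -/
def PM (n : ℕ) : Type := EuclideanSpace ℝ (Fin n) × ℝ

private lemma sqrt_add_le (a b : ℝ) (ha : 0 ≤ a) (hb : 0 ≤ b) :
    Real.sqrt (a + b) ≤ Real.sqrt a + Real.sqrt b := by
  have h : a + b ≤ (Real.sqrt a + Real.sqrt b) ^ 2 := by
    nlinarith [Real.sq_sqrt ha, Real.sq_sqrt hb, Real.sqrt_nonneg a, Real.sqrt_nonneg b]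
  calc Real.sqrt (a + b) ≤ Real.sqrt ((Real.sqrt a + Real.sqrt b) ^ 2) := Real.sqrt_le_sqrt h
    _ = Real.sqrt a + Real.sqrt b := Real.sqrt_sq (by positivity)

noncomputable instance PM.metricSpace (n : ℕ) : MetricSpace (PM n) where
  dist p q := max (dist p.1 q.1) (Real.sqrt (dist p.2 q.2))
  dist_self p := by simp
  dist_comm p q := by simp [dist_comm]
  dist_triangle p q r := by
    refine max_le ?_ ?_
    · exact (dist_triangle p.1 q.1 r.1).trans
        (add_le_add (le_max_left _ _) (le_max_left _ _))
    · refine le_trans (Real.sqrt_le_sqrt (dist_triangle p.2 q.2 r.2)) ?_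
      exact le_trans (sqrt_add_le _ _ dist_nonneg dist_nonneg)
        (add_le_add (le_max_right _ _) (le_max_right _ _))
  eq_of_dist_eq_zero := by
    intro p q h
    have h1 : dist p.1 q.1 = 0 :=
      le_antisymm (h ▸ le_max_left _ _) dist_nonneg
    have h2 : Real.sqrt (dist p.2 q.2) = 0 :=
      le_antisymm (h ▸ le_max_right _ _) (Real.sqrt_nonneg _)
    have h2' : dist p.2 q.2 = 0 :=
      le_antisymm (Real.sqrt_eq_zero'.mp h2) dist_nonneg
    have e1 : p.1 = q.1 := dist_eq_zero.mp h1
    have e2 : p.2 = q.2 := dist_eq_zero.mp h2'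
    exact Prod.ext e1 e2

noncomputable instance PM.measurableSpace (n : ℕ) : MeasurableSpace (PM n) := borel _

instance PM.borelSpace (n : ℕ) : BorelSpace (PM n) := ⟨rfl⟩

/-- The identity map from `ℝⁿ × ℝ` (with its standard structures) to the parabolic
metric space `PM n`; `𝒫^ℓ(Ω)` is formalized as `μH[ℓ] (toPM n '' Ω)`. -/
def toPM (n : ℕ) : EuclideanSpace ℝ (Fin n) × ℝ → PM n := fun p => p

/-- The parabolic ball `P_r(z₀) = {(x,t) : |x−x₀| < r, |t−t₀| < r²}`. -/
def pball {n : ℕ} (z : EuclideanSpace ℝ (Fin n) × ℝ) (r : ℝ) :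
    Set (EuclideanSpace ℝ (Fin n) × ℝ) :=
  {p | dist p.1 z.1 < r ∧ |p.2 - z.2| < r ^ 2}

/-!
Around every point of `𝒞_ε` there are arbitrarily small parabolic balls `P_r(z)` which, for all
large `i`, carry `g_i`-mass at least `(ε/2) r^{n-4}`. Parabolic balls are balls of `ϱ`, so Vitali's
covering lemma extracts a disjoint subfamily whose 5-fold enlargements cover `𝒞_ε`. Disjointness
and `∫ g_i ≤ Λ` give `∑ r^{n-4} ≤ 2Λ/ε`, and the enlarged balls, of diameter at most `10 r`, are
admissible covers for `𝒫^{n-4}`; hence `C = 2 · 10^{n-4}`.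
-/

open Metric

theorem Metric.ediam_closedBall_le_ofReal {X : Type*} [PseudoMetricSpace X] (x : X) (r : ℝ) :
    ediam (closedBall x r) ≤ ENNReal.ofReal (2 * r) :=
  ediam_le_of_forall_dist_le fun p hp q hq =>
    (dist_triangle_right p q x).trans (by linarith [mem_closedBall.1 hp, mem_closedBall.1 hq])

theorem Set.countable_of_tsum_ne_top {X : Type*} {t : Set X} {w : X → ℝ≥0∞}
    (hw : ∀ x ∈ t, w x ≠ 0) (h : ∑' x : t, w x ≠ ∞) : t.Countable := by
  rw [tsum_subtype] at h
  refine (Summable.countable_support_ennreal h).mono fun x hx => ?_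
  rw [Function.mem_support, indicator_of_mem hx]
  exact hw x hx

theorem tsum_subtype_le_of_forall_finset_sum_le {X : Type*} {t : Set X} {w : X → ℝ≥0∞}
    {M : ℝ≥0∞} (h : ∀ F : Finset X, ↑F ⊆ t → ∑ x ∈ F, w x ≤ M) : ∑' x : t, w x ≤ M := by
  rw [ENNReal.tsum_eq_iSup_sum]
  refine iSup_le fun F => ?_
  simpa only [Finset.sum_map, Function.Embedding.coe_subtype] using
    h (F.map (Function.Embedding.subtype _)) (by simp)

section Hausdorff

variable {X : Type*} [MetricSpace X] [MeasurableSpace X] [BorelSpace X]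

theorem hausdorffMeasure_le_of_forall_closedBall_cover {d : ℝ} (hd : 0 ≤ d) {s : Set X}
    {M : ℝ≥0∞}
    (h : ∀ δ > 0, ∃ (t : Set X) (r : X → ℝ), t.Countable ∧ (∀ x ∈ t, 0 ≤ r x ∧ r x ≤ δ) ∧
      s ⊆ (⋃ x ∈ t, closedBall x (r x)) ∧ ∑' x : t, ENNReal.ofReal ((2 * r x) ^ d) ≤ M) :
    μH[d] s ≤ M := by
  choose t r ht hr hcover hsum using fun k : ℕ => h (1 / (k + 1)) Nat.one_div_pos_of_nat
  have := fun k => (ht k).to_subtype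
  have hdiam (k : ℕ) (x : t k) :
      ediam (closedBall (x : X) (r k x)) ≤ ENNReal.ofReal (2 * (1 / (k + 1))) :=
    (ediam_closedBall_le_ofReal _ _).trans
      (ENNReal.ofReal_le_ofReal (by linarith [(hr k x x.2).2]))
  have hlim : Tendsto (fun k : ℕ => ENNReal.ofReal (2 * (1 / (k + 1)))) atTop (𝓝 0) := by
    simpa using ENNReal.tendsto_ofReal
      ((tendsto_one_div_add_atTop_nhds_zero_nat (𝕜 := ℝ)).const_mul 2)
  calc μH[d] s ≤ liminf (fun k => ∑' x : t k, ediam (closedBall (x : X) (r k x)) ^ d) atTop :=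
        Measure.hausdorffMeasure_le_liminf_tsum d s _ hlim _ (.of_forall hdiam)
          (.of_forall fun k => by simpa only [iUnion_subtype] using hcover k)
    _ ≤ M := by
      refine liminf_le_of_frequently_le' (.of_forall fun k => le_trans ?_ (hsum k))
      refine ENNReal.tsum_le_tsum fun x => ?_
      exact (ENNReal.rpow_le_rpow (ediam_closedBall_le_ofReal _ _) hd).trans_eq
        (ENNReal.ofReal_rpow_of_nonneg (by linarith [(hr k x x.2).1]) hd)

theorem hausdorffMeasure_le_of_forall_disjoint_closedBall_sum_le {d : ℝ} (hd : 0 ≤ d)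
    {s : Set X} {M : ℝ≥0∞} (hM : M ≠ ∞)
    (h : ∀ δ > 0, ∃ r : X → ℝ, (∀ x ∈ s, 0 < r x ∧ r x ≤ δ) ∧
      ∀ F : Finset X, ↑F ⊆ s → (F : Set X).PairwiseDisjoint (fun x => closedBall x (r x)) →
        ∑ x ∈ F, ENNReal.ofReal (r x ^ d) ≤ M) :
    μH[d] s ≤ ENNReal.ofReal (10 ^ d) * M := by
  refine hausdorffMeasure_le_of_forall_closedBall_cover hd fun δ hδ => ?_
  obtain ⟨r, hr, hsum⟩ := h (δ / 5) (by positivity)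
  obtain ⟨t, hts, hdisj, hcover⟩ :=
    Vitali.exists_disjoint_subfamily_covering_enlargement_closedBall s id r (δ / 5)
      (fun x hx => (hr x hx).2) 5 (by norm_num)
  have hpos : ∀ x ∈ t, 0 < r x := fun x hx => (hr x (hts hx)).1
  have htsum : ∑' x : t, ENNReal.ofReal (r x ^ d) ≤ M :=
    tsum_subtype_le_of_forall_finset_sum_le fun F hF =>
      hsum F (hF.trans hts) (hdisj.subset hF)
  have ht : t.Countable := countable_of_tsum_ne_top
    (fun x hx => ENNReal.ofReal_ne_zero_iff.2 (Real.rpow_pos_of_pos (hpos x hx) d))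
    (ne_top_of_le_ne_top hM htsum)
  refine ⟨t, fun x => 5 * r x, ht,
    fun x hx => ⟨by linarith [hpos x hx], by linarith [(hr x (hts hx)).2]⟩, ?_, ?_⟩
  · intro x hx
    obtain ⟨b, hb, hsub⟩ := hcover x hx
    exact mem_biUnion hb (hsub (mem_closedBall_self (hr x hx).1.le))
  · calc ∑' x : t, ENNReal.ofReal ((2 * (5 * r x)) ^ d)
        = ∑' x : t, ENNReal.ofReal (10 ^ d) * ENNReal.ofReal (r x ^ d) := by
          refine tsum_congr fun x => ?_
          rw [← ENNReal.ofReal_mul (by positivity), ← Real.mul_rpow (by norm_num)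
            (hpos x x.2).le]
          ring_nf
      _ ≤ ENNReal.ofReal (10 ^ d) * M := by
          rw [ENNReal.tsum_mul_left]
          gcongr

end Hausdorff

theorem Finset.sum_le_of_eventually_le_setLIntegral {α ι β : Type*} [MeasurableSpace α]
    {μ : Measure α} {l : Filter β} [l.NeBot] {g : β → α → ℝ≥0∞} {Λ : ℝ≥0∞}
    (hg : ∀ i, ∫⁻ x, g i x ∂μ ≤ Λ) {F : Finset ι} {A : ι → Set α} {a : ι → ℝ≥0∞}
    (hA : ∀ j ∈ F, MeasurableSet (A j)) (hdisj : (F : Set ι).PairwiseDisjoint A)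
    (ha : ∀ j ∈ F, ∀ᶠ i in l, a j ≤ ∫⁻ x in A j, g i x ∂μ) : ∑ j ∈ F, a j ≤ Λ := by
  obtain ⟨i, hi⟩ := ((eventually_all_finset F).2 ha).exists
  calc ∑ j ∈ F, a j ≤ ∑ j ∈ F, ∫⁻ x in A j, g i x ∂μ := Finset.sum_le_sum hi
    _ = ∫⁻ x in ⋃ j ∈ F, A j, g i x ∂μ := (lintegral_biUnion_finset hdisj hA _).symm
    _ ≤ ∫⁻ x, g i x ∂μ := setLIntegral_le_lintegral _ _
    _ ≤ Λ := hg i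

theorem exists_mem_Ioc_eventually_mul_rpow_lt_of_lt_liminf {ι : Type*} {l : Filter ι}
    {I : ℝ → ι → ℝ≥0∞} {a : ℝ≥0∞} {d δ : ℝ}
    (h : a < liminf (fun r => liminf (fun i => ENNReal.ofReal (r ^ (-d)) * I r i) l) (𝓝[>] 0))
    (hδ : 0 < δ) : ∃ r ∈ Ioc 0 δ, ∀ᶠ i in l, a * ENNReal.ofReal (r ^ d) < I r i := by
  obtain ⟨r, hlt, hr⟩ := ((eventually_lt_of_lt_liminf h).and (Ioc_mem_nhdsGT hδ)).exists
  refine ⟨r, hr, (eventually_lt_of_lt_liminf hlt).mono fun i hi => ?_⟩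
  rw [Real.rpow_neg hr.1.le, ENNReal.ofReal_inv_of_pos (Real.rpow_pos_of_pos hr.1 d),
    ← ENNReal.div_eq_inv_mul] at hi
  exact ENNReal.mul_lt_of_lt_div hi

theorem pball_subset_preimage_closedBall {n : ℕ} (z : EuclideanSpace ℝ (Fin n) × ℝ) (r : ℝ) :
    pball z r ⊆ toPM n ⁻¹' closedBall (toPM n z) r := by
  rintro p ⟨hx, ht⟩
  have hr : 0 < r := dist_nonneg.trans_lt hx
  exact max_le hx.le ((Real.sqrt_lt' hr).2 ht).le

theorem disjoint_pball_of_disjoint_closedBall {n : ℕ} {z w : EuclideanSpace ℝ (Fin n) × ℝ}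
    {r s : ℝ} (h : Disjoint (closedBall (toPM n z) r) (closedBall (toPM n w) s)) :
    Disjoint (pball z r) (pball w s) :=
  (h.preimage (toPM n)).mono (pball_subset_preimage_closedBall z r)
    (pball_subset_preimage_closedBall w s)

theorem measurableSet_pball {n : ℕ} (z : EuclideanSpace ℝ (Fin n) × ℝ) (r : ℝ) :
    MeasurableSet (pball z r) :=
  ((isOpen_lt (continuous_fst.dist continuous_const) continuous_const).inter
    (isOpen_lt (continuous_snd.sub continuous_const).abs continuous_const)).measurableSet

def concentrationSet (n : ℕ) (ε : ℝ) (g : ℕ → EuclideanSpace ℝ (Fin n) × ℝ → ℝ) :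
    Set (EuclideanSpace ℝ (Fin n) × ℝ) :=
  {z | ENNReal.ofReal ε ≤ liminf (fun r : ℝ => liminf (fun i : ℕ =>
    ENNReal.ofReal (r ^ ((4 : ℝ) - n)) * ∫⁻ p in pball z r, ENNReal.ofReal (g i p)) atTop) (𝓝[>] 0)}

theorem exists_mem_Ioc_mass_le_of_mem_concentrationSet {n : ℕ} {ε δ : ℝ}
    {g : ℕ → EuclideanSpace ℝ (Fin n) × ℝ → ℝ} (hε : 0 < ε) (hδ : 0 < δ)
    {z : EuclideanSpace ℝ (Fin n) × ℝ} (hz : z ∈ concentrationSet n ε g) :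
    ∃ r ∈ Ioc 0 δ, ∀ᶠ i in atTop, ENNReal.ofReal (ε / 2) * ENNReal.ofReal (r ^ ((n : ℝ) - 4)) ≤
      ∫⁻ p in pball z r, ENNReal.ofReal (g i p) := by
  have hlt := ((ENNReal.ofReal_lt_ofReal_iff hε).2 (half_lt_self hε)).trans_le hz
  rw [← neg_sub] at hlt
  obtain ⟨r, hr, hmass⟩ := exists_mem_Ioc_eventually_mul_rpow_lt_of_lt_liminf hlt hδ
  exact ⟨r, hr, hmass.mono fun _ => le_of_lt⟩

/-- There is `C = C(n)` such that for all `ε, Λ > 0` and every sequence of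
nonnegative measurable functions `g_i` with `∫ g_i ≤ Λ`, the set
`𝒞_ε = {z : liminf_{r→0⁺} liminf_{i→∞} r^{4−n} ∫_{P_r(z)} g_i ≥ ε}` satisfies
`𝒫^{n−4}(𝒞_ε) ≤ C Λ / ε`. -/
theorem concentration_set_finite_measure
    (n : ℕ) (hn : 4 ≤ n) :
    ∃ C : ℝ, 0 < C ∧ ∀ (ε Λ : ℝ), 0 < ε → 0 < Λ →
      ∀ g : ℕ → EuclideanSpace ℝ (Fin n) × ℝ → ℝ,
        (∀ i, Measurable (g i)) → (∀ i p, 0 ≤ g i p) →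
        (∀ i, (∫⁻ p, ENNReal.ofReal (g i p)) ≤ ENNReal.ofReal Λ) →
        μH[(n : ℝ) - 4] (toPM n ''
            {z | ENNReal.ofReal ε ≤
              liminf (fun r : ℝ =>
                liminf (fun i : ℕ =>
                  ENNReal.ofReal (r ^ ((4 : ℝ) - n)) *
                    ∫⁻ p in pball z r, ENNReal.ofReal (g i p)) atTop)
                (nhdsWithin 0 (Ioi 0))})
          ≤ ENNReal.ofReal (C * Λ / ε) := by
  refine ⟨2 * 10 ^ ((n : ℝ) - 4), by positivity, fun ε Λ hε _ g _ _ hg => ?_⟩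
  have hε2 : ENNReal.ofReal (ε / 2) ≠ 0 := ENNReal.ofReal_ne_zero_iff.2 (half_pos hε)
  change μH[(n : ℝ) - 4] (toPM n '' concentrationSet n ε g) ≤ _
  calc μH[(n : ℝ) - 4] (toPM n '' concentrationSet n ε g)
      ≤ ENNReal.ofReal (10 ^ ((n : ℝ) - 4)) * (ENNReal.ofReal Λ / ENNReal.ofReal (ε / 2)) := by
        refine hausdorffMeasure_le_of_forall_disjoint_closedBall_sum_le
          (sub_nonneg.2 (by exact_mod_cast hn)) (ENNReal.div_ne_top ENNReal.ofReal_ne_top hε2)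
          fun δ hδ => ?_
        choose! r hr hrmass using fun z (hz : z ∈ concentrationSet n ε g) =>
          exists_mem_Ioc_mass_le_of_mem_concentrationSet hε hδ hz
        refine ⟨r, fun _ ⟨z, hz, hzx⟩ => hzx ▸ hr z hz, fun F hF hdisj => ?_⟩
        rw [ENNReal.le_div_iff_mul_le (.inl hε2) (.inl ENNReal.ofReal_ne_top), mul_comm,
          Finset.mul_sum]
        refine Finset.sum_le_of_eventually_le_setLIntegral (l := atTop) hg
          (fun z _ => measurableSet_pball z (r z))
          (fun x hx y hy hxy => disjoint_pball_of_disjoint_closedBall (hdisj hx hy hxy))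
          fun x hx => ?_
        obtain ⟨z, hz, rfl⟩ := hF hx
        exact hrmass z hz
    _ = ENNReal.ofReal (2 * 10 ^ ((n : ℝ) - 4) * Λ / ε) := by
        rw [← ENNReal.ofReal_div_of_pos (half_pos hε), ← ENNReal.ofReal_mul (by positivity)]
        congr 1
        field_simp

end
end

section
/- Let U ⊆ ℝⁿ be open and Γ : U → (ℝⁿ)* ⊗ gl(k,ℝ) smooth, with curvature F_{ij} = ∂_iΓ_j − ∂_jΓ_i + [Γ_i, Γ_j] and covariant derivative ∇_iω = ∂_iω + [Γ_i, ω]. Then for every index a with 1 ≤ a ≤ n and at every point of U: ∂_a ( Σ_{I,J=1}^n tr(F_{IJ} F_{IJ}) ) = −4 Σ_{J=1}^n ∂_J ( Σ_{I=1}^n tr(F_{IJ} F_{aI}) ) − 4 Σ_{I,J=1}^n tr( (∇_J F_{JI}) F_{aI} ). -/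
open Set
open scoped ContDiff

noncomputable section

/-- Real `k × k` matrices, as `gl(k,ℝ)`. -/
abbrev Mat (k : ℕ) := Fin k → Fin k → ℝ

/-- Matrix multiplication. -/
def mmul {k : ℕ} (A B : Mat k) : Mat k := fun i j => ∑ l, A i l * B l j

/-- Commutator bracket `[A,B] = AB − BA`. -/
def mbra {k : ℕ} (A B : Mat k) : Mat k := mmul A B - mmul B A

/-- Trace of a product of two matrices: `tr(AB)`. -/
def trMul {k : ℕ} (A B : Mat k) : ℝ := ∑ a, ∑ b, A a b * B b a

/-- Spatial partial derivative in the `i`-th coordinate direction. -/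
def pd {n : ℕ} {E : Type*} [NormedAddCommGroup E] [NormedSpace ℝ E]
    (f : (Fin n → ℝ) → E) (x : Fin n → ℝ) (i : Fin n) : E :=
  fderiv ℝ f x (Pi.single i 1)

/-- Curvature `F_{ij} = ∂_iΓ_j − ∂_jΓ_i + [Γ_i,Γ_j]` of a connection matrix `Γ`. -/
def curvS {n k : ℕ} (Γ : (Fin n → ℝ) → Fin n → Mat k) (x : Fin n → ℝ) (i j : Fin n) : Mat k :=
  pd (fun y => Γ y j) x i - pd (fun y => Γ y i) x j + mbra (Γ x i) (Γ x j)

/-- Covariant derivative `∇_i ω = ∂_i ω + [Γ_i, ω]`. -/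
def covS {n k : ℕ} (Γ : (Fin n → ℝ) → Fin n → Mat k) (om : (Fin n → ℝ) → Mat k)
    (x : Fin n → ℝ) (i : Fin n) : Mat k :=
  pd om x i + mbra (Γ x i) (om x)

/-!
Differentiating `tr(F_IJ F_IJ)` and using the ad-invariance `tr([G,A]B) + tr(A[G,B]) = 0`, the
partial derivatives in the Leibniz rule may be replaced by covariant ones, so the left-hand side
is `2 Σ tr((∇_a F_IJ) F_IJ)`. The second Bianchi identity and the antisymmetry of `F` turn this
into `-4 Σ tr(F_IJ ∇_J F_aI)`. The covariant Leibniz rule applied to `∂_J tr(F_IJ F_aI)` gives the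
same sum plus `Σ tr((∇_J F_IJ) F_aI)`, which is cancelled by the last term since
`∇_J F_JI = -∇_J F_IJ`.
-/

section MatrixAlgebra

open Matrix

variable {k : ℕ}

lemma mmul_assoc (A B C : Mat k) : mmul (mmul A B) C = mmul A (mmul B C) :=
  Matrix.mul_assoc (of A) (of B) (of C)

lemma mmul_add (A B C : Mat k) : mmul A (B + C) = mmul A B + mmul A C :=
  Matrix.mul_add (of A) (of B) (of C)

lemma add_mmul (A B C : Mat k) : mmul (A + B) C = mmul A C + mmul B C :=
  Matrix.add_mul (of A) (of B) (of C)

lemma mmul_sub (A B C : Mat k) : mmul A (B - C) = mmul A B - mmul A C :=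
  Matrix.mul_sub (of A) (of B) (of C)

lemma sub_mmul (A B C : Mat k) : mmul (A - B) C = mmul A C - mmul B C :=
  Matrix.sub_mul (of A) (of B) (of C)

lemma trMul_comm (A B : Mat k) : trMul A B = trMul B A :=
  Matrix.trace_mul_comm (of A) (of B)

lemma trMul_neg_left (A B : Mat k) : trMul (-A) B = -trMul A B := by
  simp [trMul]

lemma trMul_sub_left (A B C : Mat k) : trMul (A - B) C = trMul A C - trMul B C := by
  simp [trMul, sub_mul]

lemma mbra_swap (A B : Mat k) : mbra B A = -mbra A B :=
  (neg_sub _ _).symm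

lemma trMul_mbra_add_trMul_mbra (G A B : Mat k) :
    trMul (mbra G A) B + trMul A (mbra G B) = 0 := by
  change ((of G * of A - of A * of G) * of B).trace + (of A * (of G * of B - of B * of G)).trace = 0
  simp only [Matrix.sub_mul, Matrix.mul_sub, Matrix.trace_sub, Matrix.mul_assoc]
  rw [← Matrix.mul_assoc (of A) (of B) (of G), Matrix.trace_mul_comm (of A * of B) (of G)]
  abel

lemma isBilinearMap_mmul : IsBilinearMap ℝ (mmul (k := k)) where
  add_left := add_mmul
  smul_left c A B := Matrix.smul_mul c (of A) (of B)
  add_right := mmul_add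
  smul_right c A B := Matrix.mul_smul (of A) c (of B)

lemma isBilinearMap_trMul : IsBilinearMap ℝ (trMul (k := k)) where
  add_left A B C := by simp [trMul, add_mul, Finset.sum_add_distrib]
  smul_left c A B := by simp [trMul, Finset.mul_sum, mul_assoc]
  add_right A B C := by simp [trMul, mul_add, Finset.sum_add_distrib]
  smul_right c A B := by simp [trMul, Finset.mul_sum, mul_left_comm]

variable (k) in
def mmulL : Mat k →L[ℝ] Mat k →L[ℝ] Mat k :=
  isBilinearMap_mmul.toContinuousBilinearMap

variable (k) in
def mbraL : Mat k →L[ℝ] Mat k →L[ℝ] Mat k :=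
  mmulL k - (mmulL k).flip

variable (k) in
def trMulL : Mat k →L[ℝ] Mat k →L[ℝ] ℝ :=
  isBilinearMap_trMul.toContinuousBilinearMap

@[simp] lemma mbraL_apply (A B : Mat k) : mbraL k A B = mbra A B := rfl

@[simp] lemma trMulL_apply (A B : Mat k) : trMulL k A B = trMul A B := rfl

lemma mbra_neg (A B : Mat k) : mbra A (-B) = -mbra A B :=
  map_neg (mbraL k A) B

section Smoothness

variable {V : Type*} [NormedAddCommGroup V] [NormedSpace ℝ V] {f g : V → Mat k} {x : V}

lemma ContDiffAt.mbra {m : WithTop ℕ∞} (hf : ContDiffAt ℝ m f x) (hg : ContDiffAt ℝ m g x) :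
    ContDiffAt ℝ m (fun y => mbra (f y) (g y)) x :=
  (mbraL k).isBoundedBilinearMap.contDiff.contDiffAt.comp x (hf.prodMk hg)

lemma DifferentiableAt.trMul (hf : DifferentiableAt ℝ f x) (hg : DifferentiableAt ℝ g x) :
    DifferentiableAt ℝ (fun y => trMul (f y) (g y)) x :=
  (trMulL k).isBoundedBilinearMap.differentiableAt _ |>.comp x (hf.prodMk hg)

end Smoothness

end MatrixAlgebra

section PartialDerivative

variable {n : ℕ} {E F G : Type*} [NormedAddCommGroup E] [NormedSpace ℝ E]
  [NormedAddCommGroup F] [NormedSpace ℝ F] [NormedAddCommGroup G] [NormedSpace ℝ G]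
  {f g : (Fin n → ℝ) → E} {x : Fin n → ℝ}

lemma pd_add (hf : DifferentiableAt ℝ f x) (hg : DifferentiableAt ℝ g x) (i : Fin n) :
    pd (fun y => f y + g y) x i = pd f x i + pd g x i := by
  simp only [pd, fderiv_fun_add hf hg, add_apply]

lemma pd_sub (hf : DifferentiableAt ℝ f x) (hg : DifferentiableAt ℝ g x) (i : Fin n) :
    pd (fun y => f y - g y) x i = pd f x i - pd g x i := by
  simp only [pd, fderiv_fun_sub hf hg, sub_apply]

lemma pd_neg (i : Fin n) : pd (fun y => -f y) x i = -pd f x i := by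
  simp only [pd, fderiv_fun_neg, neg_apply]

lemma pd_sum {ι : Type*} (s : Finset ι) {f : ι → (Fin n → ℝ) → E}
    (hf : ∀ j ∈ s, DifferentiableAt ℝ (f j) x) (i : Fin n) :
    pd (fun y => ∑ j ∈ s, f j y) x i = ∑ j ∈ s, pd (f j) x i := by
  simp only [pd, fderiv_fun_sum hf, FunLike.coe_sum, Finset.sum_apply]

lemma pd_bilinear (B : E →L[ℝ] F →L[ℝ] G) {f : (Fin n → ℝ) → E} {g : (Fin n → ℝ) → F}
    (hf : DifferentiableAt ℝ f x) (hg : DifferentiableAt ℝ g x) (i : Fin n) :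
    pd (fun y => B (f y) (g y)) x i = B (pd f x i) (g x) + B (f x) (pd g x i) := by
  simp only [pd, B.fderiv_of_bilinear hf hg, add_apply,
    ContinuousLinearMap.precompR_apply, ContinuousLinearMap.precompL_apply,
    ContinuousLinearMap.compL_apply, ContinuousLinearMap.coe_comp, Function.comp_apply]
  exact add_comm _ _

lemma ContDiffAt.pd {m N : WithTop ℕ∞} (hf : ContDiffAt ℝ N f x) (hmN : m + 1 ≤ N) (i : Fin n) :
    ContDiffAt ℝ m (fun y => pd f y i) x :=
  (hf.fderiv_right hmN).clm_apply contDiffAt_const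

lemma pd_pd_comm (hf : ContDiffAt ℝ 2 f x) (i j : Fin n) :
    pd (fun y => pd f y i) x j = pd (fun y => pd f y j) x i := by
  have hd : DifferentiableAt ℝ (fderiv ℝ f) x :=
    (hf.fderiv_right (m := 1) (by norm_num)).differentiableAt one_ne_zero
  simp only [pd, fderiv_clm_apply hd (differentiableAt_const _), fderiv_fun_const, Pi.zero_apply,
    ContinuousLinearMap.comp_zero, zero_add, ContinuousLinearMap.flip_apply]
  exact hf.isSymmSndFDerivAt (by simp) _ _

end PartialDerivative

section Connection

variable {n k : ℕ} {Γ : (Fin n → ℝ) → Fin n → Mat k} {x : Fin n → ℝ}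

lemma curvS_swap (y : Fin n → ℝ) (i j : Fin n) : curvS Γ y j i = -curvS Γ y i j := by
  simp only [curvS, mbra_swap (Γ y j)]
  abel

lemma covS_neg (om : (Fin n → ℝ) → Mat k) (i : Fin n) :
    covS Γ (fun y => -om y) x i = -covS Γ om x i := by
  simp only [covS, pd_neg, mbra_neg, neg_add]

lemma covS_curvS_swap (i j l : Fin n) :
    covS Γ (fun y => curvS Γ y j i) x l = -covS Γ (fun y => curvS Γ y i j) x l := by
  simp only [curvS_swap _ i j, covS_neg]

lemma pd_trMul_eq_covS {f g : (Fin n → ℝ) → Mat k} (hf : DifferentiableAt ℝ f x)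
    (hg : DifferentiableAt ℝ g x) (i : Fin n) :
    pd (fun y => trMul (f y) (g y)) x i
      = trMul (covS Γ f x i) (g x) + trMul (f x) (covS Γ g x i) := by
  have h_ad := trMul_mbra_add_trMul_mbra (Γ x i) (f x) (g x)
  have h_leibniz := pd_bilinear (trMulL k) hf hg i
  simp only [trMulL_apply] at h_leibniz
  simp only [h_leibniz, covS, isBilinearMap_trMul.add_left, isBilinearMap_trMul.add_right]
  linarith

lemma contDiffAt_curvS (hΓ : ContDiffAt ℝ 2 Γ x) (i j : Fin n) :
    ContDiffAt ℝ 1 (fun y => curvS Γ y i j) x := by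
  have hG := contDiffAt_pi.1 hΓ
  exact (((hG j).pd (by norm_num) i).sub ((hG i).pd (by norm_num) j)).add
    (((hG i).of_le (by norm_num)).mbra ((hG j).of_le (by norm_num)))

lemma pd_curvS (hΓ : ContDiffAt ℝ 2 Γ x) (i j l : Fin n) :
    pd (fun y => curvS Γ y i j) x l
      = pd (fun y => pd (fun z => Γ z j) y i) x l - pd (fun y => pd (fun z => Γ z i) y j) x l
        + (mbra (pd (fun z => Γ z i) x l) (Γ x j) + mbra (Γ x i) (pd (fun z => Γ z j) x l)) := by
  have hG := contDiffAt_pi.1 hΓ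
  have hGd : ∀ j, DifferentiableAt ℝ (fun y => Γ y j) x :=
    fun j => (hG j).differentiableAt two_ne_zero
  have hdGd : ∀ i j, DifferentiableAt ℝ (fun y => pd (fun z => Γ z j) y i) x :=
    fun i j => ((hG j).pd (m := 1) (by norm_num) i).differentiableAt one_ne_zero
  have h_bra := pd_bilinear (mbraL k) (hGd i) (hGd j) l
  simp only [mbraL_apply] at h_bra
  simp only [curvS]
  rw [pd_add ((hdGd i j).fun_sub (hdGd j i)) (((hG i).mbra (hG j)).differentiableAt two_ne_zero),
    pd_sub (hdGd i j) (hdGd j i), h_bra]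

/-- The second Bianchi identity: the second derivatives cancel by the symmetry of mixed partials,
the triple brackets by the Jacobi identity, which expanding `mbra` into products makes automatic. -/
lemma covS_curvS_cyclic (hΓ : ContDiffAt ℝ 2 Γ x) (i j l : Fin n) :
    covS Γ (fun y => curvS Γ y i j) x l + covS Γ (fun y => curvS Γ y j l) x i
      + covS Γ (fun y => curvS Γ y l i) x j = 0 := by
  have hG := contDiffAt_pi.1 hΓ
  simp only [covS, pd_curvS hΓ]
  rw [pd_pd_comm (hG j) i l, pd_pd_comm (hG i) j l, pd_pd_comm (hG l) j i]
  simp only [curvS, mbra, mmul_sub, sub_mmul, mmul_add, add_mmul, mmul_assoc]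
  abel

lemma trMul_covS_curvS_self (hΓ : ContDiffAt ℝ 2 Γ x) (a i j : Fin n) :
    trMul (covS Γ (fun y => curvS Γ y i j) x a) (curvS Γ x i j)
      = -trMul (curvS Γ x j i) (covS Γ (fun y => curvS Γ y a j) x i)
        - trMul (curvS Γ x i j) (covS Γ (fun y => curvS Γ y a i) x j) := by
  have h_bianchi := covS_curvS_cyclic hΓ i j a
  rw [add_assoc, add_eq_zero_iff_eq_neg, neg_add'] at h_bianchi
  rw [h_bianchi, covS_curvS_swap a j, curvS_swap x i j]
  simp only [trMul_sub_left, trMul_neg_left, neg_neg, trMul_comm (curvS Γ x i j)]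

lemma sum_trMul_covS_curvS_self (hΓ : ContDiffAt ℝ 2 Γ x) (a : Fin n) :
    ∑ i, ∑ j, trMul (covS Γ (fun y => curvS Γ y i j) x a) (curvS Γ x i j)
      = -2 * ∑ i, ∑ j, trMul (curvS Γ x i j) (covS Γ (fun y => curvS Γ y a i) x j) := by
  simp only [trMul_covS_curvS_self hΓ, Finset.sum_sub_distrib, Finset.sum_neg_distrib]
  rw [Finset.sum_comm (f := fun i j => trMul (curvS Γ x j i) (covS Γ (fun y => curvS Γ y a j) x i))]
  ring

lemma pd_sum_trMul_curvS_self (hΓ : ContDiffAt ℝ 2 Γ x) (a : Fin n) :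
    pd (fun y => ∑ i, ∑ j, trMul (curvS Γ y i j) (curvS Γ y i j)) x a
      = 2 * ∑ i, ∑ j, trMul (covS Γ (fun y => curvS Γ y i j) x a) (curvS Γ x i j) := by
  have hF i j := (contDiffAt_curvS hΓ i j).differentiableAt one_ne_zero
  rw [pd_sum _ (fun i _ => DifferentiableAt.fun_sum fun j _ => (hF i j).trMul (hF i j)),
    Finset.mul_sum]
  refine Finset.sum_congr rfl fun i _ => ?_
  rw [pd_sum _ (fun j _ => (hF i j).trMul (hF i j)), Finset.mul_sum]
  refine Finset.sum_congr rfl fun j _ => ?_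
  rw [pd_trMul_eq_covS (hF i j) (hF i j), trMul_comm (curvS Γ x i j)]
  ring

lemma pd_sum_trMul_curvS (hΓ : ContDiffAt ℝ 2 Γ x) (a j : Fin n) :
    pd (fun y => ∑ i, trMul (curvS Γ y i j) (curvS Γ y a i)) x j
      = ∑ i, (trMul (covS Γ (fun y => curvS Γ y i j) x j) (curvS Γ x a i)
        + trMul (curvS Γ x i j) (covS Γ (fun y => curvS Γ y a i) x j)) := by
  have hF i j := (contDiffAt_curvS hΓ i j).differentiableAt one_ne_zero
  rw [pd_sum _ (fun i _ => (hF i j).trMul (hF a i))]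
  exact Finset.sum_congr rfl fun i _ => pd_trMul_eq_covS (hF i j) (hF a i) j

end Connection

theorem curvature_density_derivative_identity_general
    (n k : ℕ) (U : Set (Fin n → ℝ)) (hU : IsOpen U)
    (Γ : (Fin n → ℝ) → Fin n → Mat k) (hsm : ContDiffOn ℝ ∞ Γ U) :
    ∀ x ∈ U, ∀ a : Fin n,
      pd (fun y => ∑ I, ∑ J, trMul (curvS Γ y I J) (curvS Γ y I J)) x a
        = -4 * ∑ J, pd (fun y => ∑ I, trMul (curvS Γ y I J) (curvS Γ y a I)) x J
          - 4 * ∑ I, ∑ J, trMul (covS Γ (fun y => curvS Γ y J I) x J) (curvS Γ x a I) := by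
  intro x hx a
  have hΓ : ContDiffAt ℝ 2 Γ x :=
    (hsm.contDiffAt (hU.mem_nhds hx)).of_le (WithTop.coe_le_coe.2 le_top)
  have h_swap : ∑ I, ∑ J, trMul (covS Γ (fun y => curvS Γ y J I) x J) (curvS Γ x a I)
      = -∑ J, ∑ I, trMul (covS Γ (fun y => curvS Γ y I J) x J) (curvS Γ x a I) := by
    rw [Finset.sum_comm, ← Finset.sum_neg_distrib]
    refine Finset.sum_congr rfl fun J _ => ?_
    rw [← Finset.sum_neg_distrib]
    exact Finset.sum_congr rfl fun I _ => by rw [covS_curvS_swap, trMul_neg_left]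
  rw [pd_sum_trMul_curvS_self hΓ, sum_trMul_covS_curvS_self hΓ, h_swap,
    Finset.sum_congr rfl fun J _ => pd_sum_trMul_curvS hΓ a J]
  simp only [Finset.sum_add_distrib]
  rw [Finset.sum_comm
    (f := fun J I => trMul (curvS Γ x I J) (covS Γ (fun y => curvS Γ y a I) x J))]
  ring

/-- Pointwise derivative identity for the curvature density:
`∂_a(Σ_{I,J} tr(F_{IJ}F_{IJ})) = −4 Σ_J ∂_J(Σ_I tr(F_{IJ}F_{aI})) − 4 Σ_{I,J} tr((∇_JF_{JI})F_{aI})`. -/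
theorem curvature_density_derivative_identity
    (n k : ℕ) (hn : 1 ≤ n) (hk : 1 ≤ k) (U : Set (Fin n → ℝ)) (hU : IsOpen U)
    (Γ : (Fin n → ℝ) → Fin n → Mat k) (hsm : ContDiffOn ℝ ∞ Γ U) :
    ∀ x ∈ U, ∀ a : Fin n,
      pd (fun y => ∑ I, ∑ J, trMul (curvS Γ y I J) (curvS Γ y I J)) x a
        = -4 * ∑ J, pd (fun y => ∑ I, trMul (curvS Γ y I J) (curvS Γ y a I)) x J
          - 4 * ∑ I, ∑ J, trMul (covS Γ (fun y => curvS Γ y J I) x J) (curvS Γ x a I) :=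
  curvature_density_derivative_identity_general n k U hU Γ hsm

end
end
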